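/- There exists a constant c > 0 such that for all real X, Y with 3/2 ≤ X ≤ Y, one has ∫_0^1 |f(α)|² dα ≤ c·X·Y·log X. -/

import Mathlib

open Real

/-- The exponential sum `f(α) = ∑_{1 ≤ |x| ≤ X} ∑_{1 ≤ |y| ≤ Y} e(αxy)`. -/
noncomputable def f (X Y α : ℝ) : ℂ :=
  ∑ x ∈ Finset.Icc (-⌊X⌋) ⌊X⌋, ∑ y ∈ Finset.Icc (-⌊Y⌋) ⌊Y⌋,
    if x ≠ 0 ∧ y ≠ 0 then Complex.exp (2 * Real.pi * Complex.I * (α * x * y : ℝ)) else 0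

/-!
By Parseval, `∫₀¹ |∑ᵢ e(α nᵢ)|² dα` counts the pairs `(i, j)` with `nᵢ = nⱼ`. Grouping the signs
of `x` and `y` gives `f = 2 (fPos + conj fPos)` with `fPos` the same sum over positive `x, y`, so
`∫|f|²` is at most `16` times the multiplicative energy of `[1, X]` and `[1, Y]`, the number of
solutions of `u y = v y'`. For fixed `u ≤ v` such a solution is determined by `y`, a multiple of
`v / gcd(u, v)`, so there are at most `Y gcd(u, v) / v` of them; summing over `u ≤ v` gives at
most `Y τ(v)`, and `∑_{v ≤ X} τ(v) ≤ X (1 + log X)`.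
-/

open Finset
open scoped ArithmeticFunction.sigma ComplexConjugate Combinatorics.Additive

noncomputable def e (t : ℝ) : ℂ := Complex.exp (2 * π * Complex.I * t)

theorem e_add (s t : ℝ) : e (s + t) = e s * e t := by
  simp only [e, Complex.ofReal_add, mul_add, Complex.exp_add]

theorem conj_e (t : ℝ) : conj (e t) = e (-t) := by
  simp only [e, ← Complex.exp_conj, map_mul, Complex.conj_ofReal, Complex.conj_I, map_ofNat,
    Complex.ofReal_neg]
  ring_nf

@[fun_prop]
theorem continuous_e : Continuous e := by
  unfold e; fun_prop

theorem integral_e_mul_intCast (n : ℤ) :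
    ∫ α in (0 : ℝ)..1, e (α * n) = if n = 0 then 1 else 0 := by
  split_ifs with hn
  · simp [hn, e]
  · have hc : 2 * π * Complex.I * n ≠ 0 := by simp [Real.pi_ne_zero, hn]
    have he : ∀ α : ℝ, e (α * n) = Complex.exp (2 * π * Complex.I * n * α) := fun α => by
      simp only [e]; push_cast; ring_nf
    simp only [he, integral_exp_mul_complex hc, Complex.ofReal_one, Complex.ofReal_zero, mul_zero,
      mul_one, Complex.exp_zero]
    rw [show 2 * π * Complex.I * n = n * (2 * π * Complex.I) by ring,
      Complex.exp_int_mul_two_pi_mul_I, sub_self, zero_div]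

theorem integral_norm_sum_e_sq {ι : Type*} (s : Finset ι) (n : ι → ℤ) :
    ∫ α in (0 : ℝ)..1, ‖∑ i ∈ s, e (α * n i)‖ ^ 2 = #{q ∈ s ×ˢ s | n q.1 = n q.2} := by
  have hsq : ∀ α : ℝ, ((‖∑ i ∈ s, e (α * n i)‖ ^ 2 : ℝ) : ℂ) =
      ∑ q ∈ s ×ˢ s, e (α * (n q.1 - n q.2 : ℤ)) := fun α => by
    rw [← Complex.normSq_eq_norm_sq, ← Complex.mul_conj, map_sum, sum_mul_sum, sum_product]
    refine sum_congr rfl fun i _ => sum_congr rfl fun j _ => ?_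
    rw [conj_e, ← e_add]
    push_cast; ring_nf
  apply Complex.ofReal_injective
  rw [← intervalIntegral.integral_ofReal]
  simp_rw [hsq]
  rw [intervalIntegral.integral_finsetSum fun q _ =>
    (by fun_prop : Continuous _).intervalIntegrable 0 1]
  simp only [integral_e_mul_intCast, sub_eq_zero, sum_boole, Complex.ofReal_natCast]

theorem sum_Icc_neg_ite_ne_zero {M : Type*} [AddCommMonoid M] (n : ℕ) (φ : ℤ → M) :
    ∑ x ∈ Icc (-n : ℤ) n, (if x ≠ 0 then φ x else 0) = ∑ u ∈ Ioc 0 n, (φ u + φ (-u)) := by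
  rw [← sum_filter, ← sum_fiberwise_of_maps_to (g := Int.natAbs) (t := Ioc 0 n)
    (fun x hx => by simp at hx ⊢; omega)]
  refine sum_congr rfl fun u hu => ?_
  have hu := mem_Ioc.1 hu
  rw [show {x ∈ {x ∈ Icc (-n : ℤ) n | x ≠ 0} | x.natAbs = u} = {(u : ℤ), -(u : ℤ)} by
    ext x; simp; omega, sum_pair (by omega)]

noncomputable def fPos (a b : ℕ) (α : ℝ) : ℂ :=
  ∑ p ∈ Ioc 0 a ×ˢ Ioc 0 b, e (α * (p.1 * p.2 : ℕ))

@[fun_prop]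
theorem continuous_fPos (a b : ℕ) : Continuous (fPos a b) := by
  unfold fPos; fun_prop

theorem f_eq_two_mul_add_conj (X Y α : ℝ) (hX : 0 ≤ X) (hY : 0 ≤ Y) :
    f X Y α = 2 * (fPos ⌊X⌋₊ ⌊Y⌋₊ α + conj (fPos ⌊X⌋₊ ⌊Y⌋₊ α)) := by
  have hrow : ∀ x : ℤ, ∑ y ∈ Icc (-⌊Y⌋₊ : ℤ) ⌊Y⌋₊,
      (if x ≠ 0 ∧ y ≠ 0 then e (α * x * y) else 0) =
        if x ≠ 0 then ∑ v ∈ Ioc 0 ⌊Y⌋₊, (e (α * x * v) + e (α * x * (-v : ℤ))) else 0 := by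
    intro x
    split_ifs with hx
    · simp only [hx, ne_eq, not_false_eq_true, true_and]
      exact sum_Icc_neg_ite_ne_zero _ _
    · simp [hx]
  rw [f, ← Int.natCast_floor_eq_floor hX, ← Int.natCast_floor_eq_floor hY]
  simp only [← e.eq_1]
  rw [sum_congr rfl fun x _ => hrow x, sum_Icc_neg_ite_ne_zero, fPos, map_sum,
    ← sum_add_distrib, mul_sum, sum_product]
  refine sum_congr rfl fun u _ => ?_
  rw [← sum_add_distrib]
  refine sum_congr rfl fun v _ => ?_
  simp only [conj_e]
  push_cast
  ring_nf

theorem norm_f_sq_le (X Y α : ℝ) (hX : 0 ≤ X) (hY : 0 ≤ Y) :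
    ‖f X Y α‖ ^ 2 ≤ 16 * ‖fPos ⌊X⌋₊ ⌊Y⌋₊ α‖ ^ 2 := by
  set z := fPos ⌊X⌋₊ ⌊Y⌋₊ α
  have h : ‖f X Y α‖ ≤ 4 * ‖z‖ := by
    rw [f_eq_two_mul_add_conj X Y α hX hY, norm_mul, Complex.norm_two]
    linarith [norm_add_le z (conj z), Complex.norm_conj z]
  nlinarith [norm_nonneg (f X Y α)]

theorem integral_norm_fPos_sq (a b : ℕ) :
    ∫ α in (0 : ℝ)..1, ‖fPos a b α‖ ^ 2 = Eₘ[Ioc 0 a, Ioc 0 b] := by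
  rw [mulEnergy_eq_card_filter]
  simpa only [fPos, Int.cast_natCast, Nat.cast_inj] using
    integral_norm_sum_e_sq (Ioc 0 a ×ˢ Ioc 0 b) fun p => ((p.1 * p.2 : ℕ) : ℤ)

theorem Finset.mulEnergy_eq_sum_sum_card {α : Type*} [Mul α] [DecidableEq α] (s t : Finset α) :
    Eₘ[s, t] = ∑ u ∈ s, ∑ v ∈ s, #{p ∈ t ×ˢ t | u * p.1 = v * p.2} := by
  simp only [mulEnergy, card_filter, sum_product]

theorem card_filter_mul_eq_mul_comm {α : Type*} [Mul α] [DecidableEq α] (t : Finset α)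
    (u v : α) :
    #{p ∈ t ×ˢ t | u * p.1 = v * p.2} = #{p ∈ t ×ˢ t | v * p.1 = u * p.2} :=
  card_nbij' Prod.swap Prod.swap (fun _ => by simp +contextual [eq_comm])
    (fun _ => by simp +contextual [eq_comm]) (fun _ _ => rfl) (fun _ _ => rfl)

theorem sum_sum_le_two_nsmul_of_symm {ι M : Type*} [LinearOrder ι] [AddCommMonoid M]
    [PartialOrder M] [IsOrderedAddMonoid M] (s : Finset ι) (g : ι → ι → M)
    (hg : ∀ i j, g i j = g j i) (hg₀ : ∀ i j, 0 ≤ g i j) :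
    ∑ i ∈ s, ∑ j ∈ s, g i j ≤ 2 • ∑ j ∈ s, ∑ i ∈ s with i ≤ j, g i j := by
  calc ∑ i ∈ s, ∑ j ∈ s, g i j
      ≤ ∑ i ∈ s, ∑ j ∈ s, ((if i ≤ j then g i j else 0) + if j ≤ i then g j i else 0) := by
        gcongr with i _ j _
        rcases lt_trichotomy i j with h | rfl | h
        · simp [h.le, h.not_ge]
        · simpa using le_add_of_nonneg_left (hg₀ i i)
        · simp [h.le, h.not_ge, hg i j]
    _ = 2 • ∑ j ∈ s, ∑ i ∈ s with i ≤ j, g i j := by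
        simp only [sum_add_distrib, sum_filter, two_nsmul]
        rw [sum_comm]

theorem Nat.div_gcd_dvd_of_dvd_mul {u v w : ℕ} (hv : 0 < v) (h : v ∣ u * w) :
    v / gcd v u ∣ w := by
  have hg : 0 < gcd v u := Nat.gcd_pos_of_pos_left u hv
  refine (Nat.coprime_div_gcd_div_gcd hg).dvd_of_dvd_mul_left
    (Nat.dvd_of_mul_dvd_mul_left hg ?_)
  rwa [Nat.mul_div_cancel' (gcd_dvd_left v u), ← mul_assoc,
    Nat.mul_div_cancel' (gcd_dvd_right v u)]

theorem card_filter_mul_eq_mul_le (b u v : ℕ) (hv : 0 < v) :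
    #{p ∈ Ioc 0 b ×ˢ Ioc 0 b | u * p.1 = v * p.2} ≤ b / (v / Nat.gcd v u) := by
  rw [← Nat.Ioc_filter_dvd_card_eq_div]
  refine card_le_card_of_injOn Prod.fst (fun p hp => ?_) (fun p hp q hq hpq => ?_)
  · simp only [coe_filter, mem_product, Set.mem_ofPred_eq] at hp ⊢
    exact ⟨hp.1.1, Nat.div_gcd_dvd_of_dvd_mul hv ⟨p.2, hp.2⟩⟩
  · simp only [coe_filter, mem_product, Set.mem_ofPred_eq] at hp hq
    refine Prod.ext hpq (Nat.eq_of_mul_eq_mul_left hv ?_)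
    rw [← hp.2, ← hq.2, hpq]

theorem sum_div_div_gcd_le (b v : ℕ) :
    ∑ u ∈ Ioc 0 v, b / (v / Nat.gcd v u) ≤ b * σ 0 v := by
  calc ∑ u ∈ Ioc 0 v, b / (v / Nat.gcd v u)
      ≤ ∑ u ∈ Ioc 0 v, ∑ d ∈ v.divisors with d ∣ u, b / (v / d) := by
        gcongr with u hu
        refine single_le_sum (f := fun d => b / (v / d)) (fun _ _ => Nat.zero_le _) ?_
        simp only [mem_filter, Nat.mem_divisors]
        exact ⟨⟨Nat.gcd_dvd_left v u, by have := mem_Ioc.1 hu; omega⟩, Nat.gcd_dvd_right v u⟩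
    _ = ∑ d ∈ v.divisors, #{u ∈ Ioc 0 v | d ∣ u} * (b / (v / d)) := by
        simp_rw [sum_filter]
        rw [sum_comm]
        simp [← sum_filter]
    _ = ∑ d ∈ v.divisors, v / d * (b / (v / d)) := by
        simp only [Nat.Ioc_filter_dvd_card_eq_div]
    _ ≤ ∑ d ∈ v.divisors, b := sum_le_sum fun d _ => Nat.mul_div_le b (v / d)
    _ = b * σ 0 v := by simp [ArithmeticFunction.sigma_zero_apply, mul_comm]

theorem sum_Ioc_sigma_zero_le (N : ℕ) : (∑ n ∈ Ioc 0 N, (σ 0 n : ℝ)) ≤ N * (1 + log N) := by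
  calc (∑ n ∈ Ioc 0 N, (σ 0 n : ℝ)) = ∑ n ∈ Ioc 0 N, ((N / n : ℕ) : ℝ) := by
        exact_mod_cast ArithmeticFunction.sum_Ioc_sigma0_eq_sum_div N
    _ ≤ ∑ n ∈ Ioc 0 N, (N : ℝ) / n := sum_le_sum fun _ _ => Nat.cast_div_le
    _ = N * harmonic N := by
        rw [harmonic_eq_sum_Icc, ← Icc_add_one_left_eq_Ioc, zero_add]
        push_cast
        simp [mul_sum, div_eq_mul_inv]
    _ ≤ N * (1 + log N) := by gcongr; exact harmonic_le_one_add_log N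

theorem mulEnergy_Ioc_le (a b : ℕ) :
    (Eₘ[Ioc 0 a, Ioc 0 b] : ℝ) ≤ 2 * b * (a * (1 + log a)) := by
  have hcount : Eₘ[Ioc 0 a, Ioc 0 b] ≤ 2 * (b * ∑ v ∈ Ioc 0 a, σ 0 v) := by
    rw [mulEnergy_eq_sum_sum_card, ← smul_eq_mul]
    refine (sum_sum_le_two_nsmul_of_symm _ _ (card_filter_mul_eq_mul_comm _)
      fun _ _ => Nat.zero_le _).trans ?_
    rw [mul_sum]
    gcongr with v hv
    calc ∑ u ∈ Ioc 0 a with u ≤ v, #{p ∈ Ioc 0 b ×ˢ Ioc 0 b | u * p.1 = v * p.2}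
        ≤ ∑ u ∈ Ioc 0 v, b / (v / Nat.gcd v u) := by
          rw [show {u ∈ Ioc 0 a | u ≤ v} = Ioc 0 v by ext; simp at hv ⊢; omega]
          exact sum_le_sum fun u _ => card_filter_mul_eq_mul_le b u v (mem_Ioc.1 hv).1
      _ ≤ b * σ 0 v := sum_div_div_gcd_le b v
  calc (Eₘ[Ioc 0 a, Ioc 0 b] : ℝ) ≤ 2 * (b * ∑ v ∈ Ioc 0 a, (σ 0 v : ℝ)) := by
        exact_mod_cast hcount
    _ ≤ 2 * b * (a * (1 + log a)) := by
        rw [← mul_assoc]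
        gcongr
        exact sum_Ioc_sigma_zero_le a

theorem integral_norm_f_sq_le (X Y : ℝ) (hX : 0 ≤ X) (hY : 0 ≤ Y) :
    ∫ α in (0 : ℝ)..1, ‖f X Y α‖ ^ 2 ≤ 32 * ⌊Y⌋₊ * (⌊X⌋₊ * (1 + log ⌊X⌋₊)) := by
  have hcont : Continuous fun α => ‖f X Y α‖ ^ 2 := by
    simp_rw [f_eq_two_mul_add_conj _ _ _ hX hY]
    fun_prop
  calc ∫ α in (0 : ℝ)..1, ‖f X Y α‖ ^ 2
      ≤ ∫ α in (0 : ℝ)..1, 16 * ‖fPos ⌊X⌋₊ ⌊Y⌋₊ α‖ ^ 2 :=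
        intervalIntegral.integral_mono_on zero_le_one (hcont.intervalIntegrable 0 1)
          ((by fun_prop : Continuous _).intervalIntegrable 0 1) fun α _ =>
            norm_f_sq_le X Y α hX hY
    _ ≤ 32 * ⌊Y⌋₊ * (⌊X⌋₊ * (1 + log ⌊X⌋₊)) := by
        rw [intervalIntegral.integral_const_mul, integral_norm_fPos_sq]
        linarith [mulEnergy_Ioc_le ⌊X⌋₊ ⌊Y⌋₊]

theorem stmt6 :
    ∃ c > 0, ∀ X Y : ℝ, 3 / 2 ≤ X → X ≤ Y →
      ∫ α in (0 : ℝ)..1, (‖f X Y α‖) ^ 2 ≤ c * X * Y * Real.log X := by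
  refine ⟨128, by norm_num, fun X Y hX hXY => ?_⟩
  have hX₀ : 0 < X := by linarith
  have hfloor : 0 < (⌊X⌋₊ : ℝ) := by exact_mod_cast Nat.floor_pos.2 (by linarith)
  have hlog : 1 + log ⌊X⌋₊ ≤ 4 * log X := by
    have h₁ : log ⌊X⌋₊ ≤ log X := log_le_log hfloor (Nat.floor_le hX₀.le)
    have h₂ : 1 - (3 / 2 : ℝ)⁻¹ ≤ log X :=
      (one_sub_inv_le_log_of_pos (by norm_num)).trans (log_le_log (by norm_num) hX)
    linarith
  have hXlog : (⌊X⌋₊ : ℝ) * (1 + log ⌊X⌋₊) ≤ X * (4 * log X) :=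
    mul_le_mul (Nat.floor_le hX₀.le) hlog (by positivity) hX₀.le
  calc ∫ α in (0 : ℝ)..1, ‖f X Y α‖ ^ 2 ≤ 32 * ⌊Y⌋₊ * (⌊X⌋₊ * (1 + log ⌊X⌋₊)) :=
        integral_norm_f_sq_le X Y hX₀.le (hX₀.le.trans hXY)
    _ ≤ 32 * Y * (X * (4 * log X)) :=
        mul_le_mul (by gcongr; exact Nat.floor_le (hX₀.le.trans hXY)) hXlog
          (by positivity) (by linarith)
    _ = 128 * X * Y * log X := by ring
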